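/- arXiv:1903.07837 — 2 statements merged into one kernel-verified Lean document; each statement's English description precedes it below -/
import Mathlib

section
/- Let M be a two-counter Minsky machine with instruction set I and let (A, R, Rp, A0, ↪) be its APA encoding. If x = (q1, 1, q2, q3) ∈ I, then for all m1 ≥ 1, all m2 ∈ ℕ, and every reference set Ax ⊆ A there exist two consecutive APA transitions F(A^I ∪ {σQ(q1), σ1(m1), σ2(m2)}) ↪^{Ax} F(A^I ∪ {σIc(x), σ1(m1), σ2(m2)}) ↪^{Ax} F(A^I ∪ {σQ(q3), σ1(m1−1), σ2(m2)}), simulating the decrement of the first counter. -/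
/-- A two-counter Minsky machine over a state type `Q`.  An instruction
`(q1, i, q2, u)` has source state `q1 ≠ qf`, counter index `i ∈ {1,2}`,
target state `q2` and optional alternative target `u : Option Q`
(`none` playing the role of `ε`). -/
structure Minsky (Q : Type*) where
  n1 : ℕ
  n2 : ℕ
  q0 : Q
  qf : Q
  I : Set (Q × ℕ × Q × Option Q)
  I_idx : ∀ x ∈ I, x.2.1 = 1 ∨ x.2.1 = 2
  I_src : ∀ x ∈ I, x.1 ≠ qf
  I_total : ∀ q : Q, q ≠ qf → ∃ i q2 u, (q, i, q2, u) ∈ I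

/-- The one-step relation `⇒` of a two-counter Minsky machine. -/
inductive Minsky.Step {Q : Type*} (M : Minsky Q) : Q × ℕ × ℕ → Q × ℕ × ℕ → Prop
  | inc1 {q1 q2 : Q} {m1 m2 : ℕ} : (q1, 1, q2, (none : Option Q)) ∈ M.I →
      M.Step (q1, m1, m2) (q2, m1 + 1, m2)
  | inc2 {q1 q2 : Q} {m1 m2 : ℕ} : (q1, 2, q2, (none : Option Q)) ∈ M.I →
      M.Step (q1, m1, m2) (q2, m1, m2 + 1)
  | dec1 {q1 q2 q3 : Q} {m1 m2 : ℕ} : (q1, 1, q2, some q3) ∈ M.I → 0 < m1 →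
      M.Step (q1, m1, m2) (q3, m1 - 1, m2)
  | dec2 {q1 q2 q3 : Q} {m1 m2 : ℕ} : (q1, 2, q2, some q3) ∈ M.I → 0 < m2 →
      M.Step (q1, m1, m2) (q3, m1, m2 - 1)
  | zero1 {q1 q2 q3 : Q} {m2 : ℕ} : (q1, 1, q2, some q3) ∈ M.I →
      M.Step (q1, 0, m2) (q2, 0, m2)
  | zero2 {q1 q2 q3 : Q} {m1 : ℕ} : (q1, 2, q2, some q3) ∈ M.I →
      M.Step (q1, m1, 0) (q2, m1, 0)

/-- `M.StepN k c c'` says `⇒^k(c) = c'`, i.e. `c'` is obtained from `c`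
by exactly `k` Minsky machine steps. -/
def Minsky.StepN {Q : Type*} (M : Minsky Q) : ℕ → Q × ℕ × ℕ → Q × ℕ × ℕ → Prop
  | 0, c, c' => c = c'
  | k + 1, c, c' => ∃ c'', M.Step c c'' ∧ M.StepN k c'' c'

/-- An Abstract Persuasion Argumentation framework over the argument type `α`:
an attack relation `R`, a persuasion relation `Rp ⊆ A × (A ∪ {ε}) × A`
(`none` playing the role of `ε`), and an initial set `A0`.
A state `F(A1)` is identified with the set `A1 ⊆ A` of visible arguments
(since the state is `(A1, R ∩ (A1 × A1))`, a function of `A1`). -/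
structure APA (α : Type*) where
  R : Set (α × α)
  Rp : Set (α × Option α × α)
  A0 : Set α

namespace APA

variable {α : Type*} (F : APA α)

/-- `a1` attacks `a2` in the state `F(A1)`. -/
def Attacks (A1 : Set α) (a1 a2 : α) : Prop :=
  a1 ∈ A1 ∧ a2 ∈ A1 ∧ (a1, a2) ∈ F.R

/-- `Γ^{Ax}_{F(A1)}`: members `(a1, α, a2)` of `Rp` with `a1 ∈ A1`,
`α ∈ {ε} ∪ A1`, and `a1` not attacked in `F(A1)` by any member of `Ax`. -/
def gamma (Ax A1 : Set α) : Set (α × Option α × α) :=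
  {t | t ∈ F.Rp ∧ t.1 ∈ A1 ∧ (∀ a : α, t.2.1 = some a → a ∈ A1) ∧
    ∀ b ∈ Ax, ¬ F.Attacks A1 b t.1}

/-- `neg^{A1}(Γ)`. -/
def neg (A1 : Set α) (Γ : Set (α × Option α × α)) : Set α :=
  {ax | ax ∈ A1 ∧ ∃ a1 ∈ A1, ∃ a2 : α, (a1, some ax, a2) ∈ Γ}

/-- `pos^{A1}(Γ)`. -/
def pos (A1 : Set α) (Γ : Set (α × Option α × α)) : Set α :=
  {a2 | ∃ a1 ∈ A1, ∃ m : Option α, (∀ a : α, m = some a → a ∈ A1) ∧ (a1, m, a2) ∈ Γ}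

/-- The transition `F(A1) ↪^{Ax} F(A2)` effected by the specific nonempty
`Γ ⊆ Γ^{Ax}_{F(A1)}`. -/
def TransVia (Ax : Set α) (Γ : Set (α × Option α × α)) (A1 A2 : Set α) : Prop :=
  Γ.Nonempty ∧ Γ ⊆ F.gamma Ax A1 ∧ A2 = (A1 \ neg A1 Γ) ∪ pos A1 Γ

/-- The transition relation `F(A1) ↪^{Ax} F(A2)`. -/
def Trans (Ax A1 A2 : Set α) : Prop :=
  ∃ Γ : Set (α × Option α × α), F.TransVia Ax Γ A1 A2

/-- A state `F(A1)` is reachable iff it is obtained from the initial state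
`F(A0)` by a finite sequence of transitions (with arbitrary reference sets). -/
def Reachable (A1 : Set α) : Prop :=
  Relation.ReflTransGen (fun X Y => ∃ Ax : Set α, F.Trans Ax X Y) F.A0 A1

end APA

/-- `sigC σ1 σ2 i` is `σi` for `i ∈ {1, 2}`. -/
def sigC {α : Type*} (σ1 σ2 : ℕ → α) (i : ℕ) : ℕ → α :=
  if i = 1 then σ1 else σ2

/-- The persuasion relation of the APA encoding of a Minsky machine `M`. -/
def encRp {Q α : Type*} (M : Minsky Q) (σ1 σ2 : ℕ → α) (σQ : Q → α)
    (σI σIc : M.I → α) : Set (α × Option α × α) :=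
  {t | (∃ x : M.I, t = (σI x, some (σQ x.val.1), σIc x)) ∨
    (∃ x : M.I, ∃ n : ℕ, x.val.2.2.2 = none ∧
      t = (σIc x, some (sigC σ1 σ2 x.val.2.1 n), sigC σ1 σ2 x.val.2.1 (n + 1))) ∨
    (∃ x : M.I, ∃ n : ℕ, 1 ≤ n ∧ (∃ q3 : Q, x.val.2.2.2 = some q3) ∧
      t = (σIc x, some (sigC σ1 σ2 x.val.2.1 n), sigC σ1 σ2 x.val.2.1 (n - 1))) ∨
    (∃ x : M.I, ∃ n : ℕ, x.val.2.2.2 = none ∧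
      t = (sigC σ1 σ2 x.val.2.1 n, some (σIc x), σQ x.val.2.2.1)) ∨
    (∃ x : M.I, ∃ n : ℕ, 1 ≤ n ∧ ∃ q3 : Q, x.val.2.2.2 = some q3 ∧
      t = (sigC σ1 σ2 x.val.2.1 n, some (σIc x), σQ q3)) ∨
    (∃ x : M.I, ∃ q3 : Q, x.val.2.2.2 = some q3 ∧
      t = (sigC σ1 σ2 x.val.2.1 0, some (σIc x), σQ x.val.2.2.1))}

/-- The APA encoding of a two-counter Minsky machine `M`, over the argument
type `α` (playing the role of the class `A` of arguments): injective maps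
`σ1, σ2, σQ, σI, σIc` with pairwise disjoint ranges covering `α`, an empty
attack relation, the persuasion relation `encRp`, and the initial set
`{σ1 n1, σ2 n2, σQ q0} ∪ A^I`. -/
structure Encoding {Q : Type*} (M : Minsky Q) (α : Type*) extends APA α where
  σ1 : ℕ → α
  σ2 : ℕ → α
  σQ : Q → α
  σI : M.I → α
  σIc : M.I → α
  inj1 : Function.Injective σ1
  inj2 : Function.Injective σ2
  injQ : Function.Injective σQ
  injI : Function.Injective σI
  injIc : Function.Injective σIc
  disjoint_ranges : List.Pairwise Disjoint
    [Set.range σ1, Set.range σ2, Set.range σQ, Set.range σI, Set.range σIc]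
  ranges_cover : Set.range σ1 ∪ Set.range σ2 ∪ Set.range σQ ∪
    Set.range σI ∪ Set.range σIc = Set.univ
  R_empty : toAPA.R = ∅
  Rp_spec : toAPA.Rp = encRp M σ1 σ2 σQ σI σIc
  A0_spec : toAPA.A0 = {σ1 M.n1, σ2 M.n2, σQ M.q0} ∪ Set.range σI

/-- The set of visible arguments of the APA state `F(A^I ∪ {σQ q, σ1 m1, σ2 m2})`
corresponding to the Minsky machine configuration `(q, m1, m2)`. -/
def encState {Q α : Type*} {M : Minsky Q} (E : Encoding M α)
    (q : Q) (m1 m2 : ℕ) : Set α :=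
  Set.range E.σI ∪ {E.σQ q, E.σ1 m1, E.σ2 m2}

/-- The set of visible arguments of the intermediate APA state
`F(A^I ∪ {σIc x, σ1 m1, σ2 m2})`. -/
def encStateC {Q α : Type*} {M : Minsky Q} (E : Encoding M α)
    (x : M.I) (m1 m2 : ℕ) : Set α :=
  Set.range E.σI ∪ {E.σIc x, E.σ1 m1, E.σ2 m2}

/-!
Since the encoding has no attacks, every nonempty set of persuasion triples whose sources and
premises are visible fires: it removes the premises and adds the conclusions. The first step
fires `(σI x, σQ q1, σIc x)`; the second fires `(σIc x, σ1 m1, σ1 (m1 - 1))` together with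
`(σ1 m1, σIc x, σQ q3)`, consuming `σ1 m1` and `σIc x`. Disjointness of the ranges of the
`σ`'s ensures that nothing else is removed, so the resulting states are the claimed ones.
-/

namespace APA

variable {α : Type*} {F : APA α} {Ax A1 A2 : Set α} {Γ : Set (α × Option α × α)}

theorem neg_eq_of_subset_gamma (hΓ : Γ ⊆ F.gamma Ax A1) :
    neg A1 Γ = {b | ∃ a1 a2, (a1, some b, a2) ∈ Γ} := by
  ext b
  refine ⟨fun ⟨_, a1, _, a2, ht⟩ => ⟨a1, a2, ht⟩, fun ⟨a1, a2, ht⟩ => ?_⟩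
  obtain ⟨-, ha1, hb, -⟩ := hΓ ht
  exact ⟨hb b rfl, a1, ha1, a2, ht⟩

theorem pos_eq_of_subset_gamma (hΓ : Γ ⊆ F.gamma Ax A1) :
    pos A1 Γ = {a2 | ∃ a1 m, (a1, m, a2) ∈ Γ} := by
  ext a2
  refine ⟨fun ⟨a1, _, m, _, ht⟩ => ⟨a1, m, ht⟩, fun ⟨a1, m, ht⟩ => ?_⟩
  obtain ⟨-, ha1, hm, -⟩ := hΓ ht
  exact ⟨a1, ha1, m, hm, ht⟩

theorem trans_of_subset_gamma (hne : Γ.Nonempty)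
    (hΓ : Γ ⊆ F.gamma Ax A1) :
    F.Trans Ax A1
      (A1 \ {b | ∃ a1 a2, (a1, some b, a2) ∈ Γ} ∪ {a2 | ∃ a1 m, (a1, m, a2) ∈ Γ}) :=
  ⟨Γ, hne, hΓ, by rw [neg_eq_of_subset_gamma hΓ, pos_eq_of_subset_gamma hΓ]⟩

theorem mem_gamma_of_R_eq_empty (hR : F.R = ∅) {a1 b a2 : α}
    (ht : (a1, some b, a2) ∈ F.Rp) (ha1 : a1 ∈ A1) (hb : b ∈ A1) :
    (a1, some b, a2) ∈ F.gamma Ax A1 :=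
  ⟨ht, ha1, fun _ h => Option.some_injective _ h ▸ hb,
    fun _ _ ⟨_, _, hR'⟩ => by simp [hR] at hR'⟩

theorem trans_pair_of_R_eq_empty (hR : F.R = ∅) {a1 b a2 a1' b' a2' : α}
    (ht : (a1, some b, a2) ∈ F.Rp) (ha1 : a1 ∈ A1) (hb : b ∈ A1)
    (ht' : (a1', some b', a2') ∈ F.Rp) (ha1' : a1' ∈ A1) (hb' : b' ∈ A1)
    (hA2 : A1 \ {b, b'} ∪ {a2, a2'} = A2) :
    F.Trans Ax A1 A2 := by
  have hΓ : {(a1, some b, a2), (a1', some b', a2')} ⊆ F.gamma Ax A1 := by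
    rintro t (rfl | rfl)
    exacts [mem_gamma_of_R_eq_empty hR ht ha1 hb, mem_gamma_of_R_eq_empty hR ht' ha1' hb']
  have hneg : {c | ∃ x y, (x, some c, y) ∈ ({(a1, some b, a2), (a1', some b', a2')} :
      Set (α × Option α × α))} = {b, b'} := by
    ext c
    simp only [Set.mem_ofPred_eq, Set.mem_insert_iff, Set.mem_singleton_iff, Prod.mk.injEq,
      Option.some.injEq]
    aesop
  have hpos : {c | ∃ x m, (x, m, c) ∈ ({(a1, some b, a2), (a1', some b', a2')} :
      Set (α × Option α × α))} = {a2, a2'} := by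
    ext c
    simp only [Set.mem_ofPred_eq, Set.mem_insert_iff, Set.mem_singleton_iff, Prod.mk.injEq]
    aesop
  have := trans_of_subset_gamma (Set.insert_nonempty _ _) hΓ
  rwa [hneg, hpos, hA2] at this

theorem trans_singleton_of_R_eq_empty (hR : F.R = ∅) {a1 b a2 : α}
    (ht : (a1, some b, a2) ∈ F.Rp) (ha1 : a1 ∈ A1) (hb : b ∈ A1)
    (hA2 : A1 \ {b} ∪ {a2} = A2) :
    F.Trans Ax A1 A2 :=
  trans_pair_of_R_eq_empty hR ht ha1 hb ht ha1 hb (by simpa only [Set.pair_eq_singleton])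

end APA

namespace Encoding

variable {Q α : Type*} {M : Minsky Q} (E : Encoding M α)

theorem σ1_ne_σ2 (m n : ℕ) : E.σ1 m ≠ E.σ2 n :=
  Set.disjoint_range_iff.mp
    (E.disjoint_ranges.rel_get_of_lt (a := 0) (b := 1) (by simp)) m n

theorem σ1_ne_σQ (m : ℕ) (q : Q) : E.σ1 m ≠ E.σQ q :=
  Set.disjoint_range_iff.mp
    (E.disjoint_ranges.rel_get_of_lt (a := 0) (b := 2) (by simp [Fin.lt_def])) m q

theorem σ1_ne_σI (m : ℕ) (y : M.I) : E.σ1 m ≠ E.σI y :=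
  Set.disjoint_range_iff.mp
    (E.disjoint_ranges.rel_get_of_lt (a := 0) (b := 3) (by simp [Fin.lt_def])) m y

theorem σ2_ne_σQ (m : ℕ) (q : Q) : E.σ2 m ≠ E.σQ q :=
  Set.disjoint_range_iff.mp
    (E.disjoint_ranges.rel_get_of_lt (a := 1) (b := 2) (by simp [Fin.lt_def])) m q

theorem σ2_ne_σI (m : ℕ) (y : M.I) : E.σ2 m ≠ E.σI y :=
  Set.disjoint_range_iff.mp
    (E.disjoint_ranges.rel_get_of_lt (a := 1) (b := 3) (by simp [Fin.lt_def])) m y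

theorem σ2_ne_σIc (m : ℕ) (y : M.I) : E.σ2 m ≠ E.σIc y :=
  Set.disjoint_range_iff.mp
    (E.disjoint_ranges.rel_get_of_lt (a := 1) (b := 4) (by simp [Fin.lt_def])) m y

theorem σQ_ne_σI (q : Q) (y : M.I) : E.σQ q ≠ E.σI y :=
  Set.disjoint_range_iff.mp
    (E.disjoint_ranges.rel_get_of_lt (a := 2) (b := 3) (by simp [Fin.lt_def])) q y

theorem σI_ne_σIc (y z : M.I) : E.σI y ≠ E.σIc z :=
  Set.disjoint_range_iff.mp
    (E.disjoint_ranges.rel_get_of_lt (a := 3) (b := 4) (by simp [Fin.lt_def])) y z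

theorem encState_sdiff_union (x : M.I) (m1 m2 : ℕ) :
    encState E x.val.1 m1 m2 \ {E.σQ x.val.1} ∪ {E.σIc x} = encStateC E x m1 m2 := by
  ext a
  simp only [encState, encStateC, Set.mem_union, Set.mem_sdiff, Set.mem_singleton_iff,
    Set.mem_insert_iff, Set.mem_range]
  grind [E.σ1_ne_σQ, E.σ2_ne_σQ, E.σQ_ne_σI]

theorem encStateC_sdiff_union (x : M.I) (m1 m2 n : ℕ) (q : Q) :
    encStateC E x m1 m2 \ {E.σ1 m1, E.σIc x} ∪ {E.σ1 n, E.σQ q} = encState E q n m2 := by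
  ext a
  simp only [encState, encStateC, Set.mem_union, Set.mem_sdiff, Set.mem_singleton_iff,
    Set.mem_insert_iff, Set.mem_range]
  grind [E.σ1_ne_σ2, E.σ1_ne_σI, E.σ2_ne_σIc, E.σI_ne_σIc]

theorem select_mem_Rp (x : M.I) : (E.σI x, some (E.σQ x.val.1), E.σIc x) ∈ E.Rp := by
  rw [E.Rp_spec]
  exact Or.inl ⟨x, rfl⟩

theorem decrement_mem_Rp {x : M.I} {q3 : Q} (hx : x.val.2.2.2 = some q3) {n : ℕ}
    (hn : 1 ≤ n) :
    (E.σIc x, some (sigC E.σ1 E.σ2 x.val.2.1 n), sigC E.σ1 E.σ2 x.val.2.1 (n - 1)) ∈ E.Rp := by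
  rw [E.Rp_spec]
  exact Or.inr (Or.inr (Or.inl ⟨x, n, hn, ⟨q3, hx⟩, rfl⟩))

theorem jump_mem_Rp {x : M.I} {q3 : Q} (hx : x.val.2.2.2 = some q3) {n : ℕ} (hn : 1 ≤ n) :
    (sigC E.σ1 E.σ2 x.val.2.1 n, some (E.σIc x), E.σQ q3) ∈ E.Rp := by
  rw [E.Rp_spec]
  exact Or.inr (Or.inr (Or.inr (Or.inr (Or.inl ⟨x, n, hn, q3, hx, rfl⟩))))

end Encoding

theorem decrement_first_counter_simulated_general {Q α : Type*}
    (M : Minsky Q) (E : Encoding M α) (q1 q2 q3 : Q)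
    (hx : (q1, 1, q2, some q3) ∈ M.I) (m1 : ℕ) (hm1 : 1 ≤ m1) (m2 : ℕ)
    (Ax : Set α) :
    E.toAPA.Trans Ax (encState E q1 m1 m2)
      (encStateC E ⟨(q1, 1, q2, some q3), hx⟩ m1 m2) ∧
    E.toAPA.Trans Ax (encStateC E ⟨(q1, 1, q2, some q3), hx⟩ m1 m2)
      (encState E q3 (m1 - 1) m2) := by
  set x : M.I := ⟨(q1, 1, q2, some q3), hx⟩
  constructor
  · refine APA.trans_singleton_of_R_eq_empty E.R_empty (E.select_mem_Rp x) ?_ ?_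
      (E.encState_sdiff_union x m1 m2) <;> simp [encState, x]
  · refine APA.trans_pair_of_R_eq_empty E.R_empty (E.decrement_mem_Rp (x := x) rfl hm1) ?_ ?_
      (E.jump_mem_Rp (x := x) rfl hm1) ?_ ?_ (E.encStateC_sdiff_union x m1 m2 (m1 - 1) q3) <;>
      simp [encStateC, x, sigC]

/-- simulation of the decrement instruction `(q1, 1, q2, q3)`
on the first counter (when `m1 ≥ 1`) by two consecutive APA transitions. -/
theorem decrement_first_counter_simulated {Q α : Type*} [Finite Q]
    (M : Minsky Q) (E : Encoding M α) (q1 q2 q3 : Q)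
    (hx : (q1, 1, q2, some q3) ∈ M.I) (m1 : ℕ) (hm1 : 1 ≤ m1) (m2 : ℕ)
    (Ax : Set α) :
    E.toAPA.Trans Ax (encState E q1 m1 m2)
      (encStateC E ⟨(q1, 1, q2, some q3), hx⟩ m1 m2) ∧
    E.toAPA.Trans Ax (encStateC E ⟨(q1, 1, q2, some q3), hx⟩ m1 m2)
      (encState E q3 (m1 - 1) m2) :=
  decrement_first_counter_simulated_general M E q1 q2 q3 hx m1 hm1 m2 Ax
end

section
/- Let M be a two-counter Minsky machine with instruction set I and let (A, R, Rp, A0, ↪) be its APA encoding. If x = (q1, 1, q2, q3) ∈ I, then for all m2 ∈ ℕ and every reference set Ax ⊆ A there is a single APA transition F(A^I ∪ {σIc(x), σ1(0), σ2(m2)}) ↪^{Ax} F(A^I ∪ {σQ(q2), σ1(0), σ2(m2)}), obtained by the conversion (σ1(0), σIc(x), σQ(q2)) ∈ Rp; in particular the counter-argument σ1(0) remains visible. -/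
/-! A transition by a single conversion `(a, b, c)` removes exactly `b` and adds exactly `c`.
For the zero test this removes `σIc x`, which by disjointness of the ranges is none of the other
visible arguments, and adds `σQ q2`; since the encoding has no attacks, no reference set can
block the conversion. -/

namespace APA

variable {α : Type*} (F : APA α)

theorem not_attacks_of_R_eq_empty (hR : F.R = ∅) (A1 : Set α) (a b : α) :
    ¬ F.Attacks A1 a b := by
  simp [Attacks, hR]

variable {A1 : Set α} {a b c : α}

theorem neg_singleton_some (ha : a ∈ A1) (hb : b ∈ A1) :
    neg A1 {(a, some b, c)} = {b} := by
  ext d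
  simp only [neg, Set.mem_ofPred_eq, Set.mem_singleton_iff, Prod.mk.injEq, Option.some.injEq]
  constructor
  · rintro ⟨-, _, -, _, -, rfl, -⟩
    rfl
  · rintro rfl
    exact ⟨hb, a, ha, c, rfl, rfl, rfl⟩

theorem pos_singleton_some (ha : a ∈ A1) (hb : b ∈ A1) :
    pos A1 {(a, some b, c)} = {c} := by
  ext d
  simp only [pos, Set.mem_singleton_iff, Prod.mk.injEq]
  constructor
  · rintro ⟨_, -, _, -, -, -, rfl⟩
    rfl
  · rintro rfl
    exact ⟨a, ha, some b, by simpa using hb, rfl, rfl, rfl⟩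

theorem transVia_singleton_some {Ax : Set α} (hRp : (a, some b, c) ∈ F.Rp) (ha : a ∈ A1)
    (hb : b ∈ A1) (hAx : ∀ d ∈ Ax, ¬ F.Attacks A1 d a) :
    F.TransVia Ax {(a, some b, c)} A1 (A1 \ {b} ∪ {c}) := by
  refine ⟨Set.singleton_nonempty _, ?_, by rw [neg_singleton_some ha hb, pos_singleton_some ha hb]⟩
  rintro t rfl
  exact ⟨hRp, ha, by simpa using hb, hAx⟩

end APA

namespace Encoding

variable {Q α : Type*} {M : Minsky Q} (E : Encoding M α)

theorem disjoint_range_σ1_σIc : Disjoint (Set.range E.σ1) (Set.range E.σIc) := by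
  have h := E.disjoint_ranges
  simp only [List.pairwise_cons, List.mem_cons] at h
  exact h.1 _ (by simp)

theorem disjoint_range_σ2_σIc : Disjoint (Set.range E.σ2) (Set.range E.σIc) := by
  have h := E.disjoint_ranges
  simp only [List.pairwise_cons, List.mem_cons] at h
  exact h.2.1 _ (by simp)

theorem disjoint_range_σI_σIc : Disjoint (Set.range E.σI) (Set.range E.σIc) := by
  have h := E.disjoint_ranges
  simp only [List.pairwise_cons, List.mem_cons] at h
  exact h.2.2.2.1 _ (by simp)

theorem zero_test_mem_Rp (x : M.I) {q3 : Q} (hx : x.val.2.2.2 = some q3) :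
    (sigC E.σ1 E.σ2 x.val.2.1 0, some (E.σIc x), E.σQ x.val.2.2.1) ∈ E.Rp := by
  rw [E.Rp_spec]
  exact Or.inr <| Or.inr <| Or.inr <| Or.inr <| Or.inr ⟨x, q3, hx, rfl⟩

end Encoding

theorem encStateC_diff_union {Q α : Type*} {M : Minsky Q} (E : Encoding M α) (x : M.I)
    (q : Q) (m1 m2 : ℕ) :
    encStateC E x m1 m2 \ {E.σIc x} ∪ {E.σQ q} = encState E q m1 m2 := by
  have hI : E.σIc x ∉ Set.range E.σI :=
    E.disjoint_range_σI_σIc.notMem_of_mem_right (Set.mem_range_self x)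
  have h1 : E.σ1 m1 ≠ E.σIc x :=
    E.disjoint_range_σ1_σIc.ne_of_mem (Set.mem_range_self m1) (Set.mem_range_self x)
  have h2 : E.σ2 m2 ≠ E.σIc x :=
    E.disjoint_range_σ2_σIc.ne_of_mem (Set.mem_range_self m2) (Set.mem_range_self x)
  ext a
  simp only [encState, encStateC, Set.mem_union, Set.mem_sdiff, Set.mem_insert_iff,
    Set.mem_singleton_iff]
  constructor
  · rintro (⟨h | rfl | rfl | rfl, hne⟩ | rfl) <;> tauto
  · rintro (h | rfl | rfl | rfl)
    · exact Or.inl ⟨Or.inl h, fun he => hI (he ▸ h)⟩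
    all_goals tauto

theorem second_phase_zero_test_transition_general {Q α : Type*}
    (M : Minsky Q) (E : Encoding M α) (q1 q2 q3 : Q)
    (hx : (q1, 1, q2, some q3) ∈ M.I) (m2 : ℕ) (Ax : Set α) :
    E.toAPA.TransVia Ax
      {(E.σ1 0, some (E.σIc ⟨(q1, 1, q2, some q3), hx⟩), E.σQ q2)}
      (encStateC E ⟨(q1, 1, q2, some q3), hx⟩ 0 m2)
      (encState E q2 0 m2) ∧
    E.σ1 0 ∈ encState E q2 0 m2 := by
  set x : M.I := ⟨(q1, 1, q2, some q3), hx⟩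
  refine ⟨?_, by simp [encState]⟩
  rw [← encStateC_diff_union E x q2 0 m2]
  exact E.toAPA.transVia_singleton_some (E.zero_test_mem_Rp x rfl) (by simp [encStateC])
    (by simp [encStateC]) fun d _ => E.toAPA.not_attacks_of_R_eq_empty E.R_empty _ d _

/-- for the instruction `x = (q1, 1, q2, q3)`, the single APA
transition from `F(A^I ∪ {σIc x, σ1 0, σ2 m2})` to `F(A^I ∪ {σQ q2, σ1 0, σ2 m2})`
obtained by the conversion `(σ1 0, σIc x, σQ q2) ∈ Rp`; in particular the
counter-argument `σ1 0` remains visible. -/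
theorem second_phase_zero_test_transition {Q α : Type*} [Finite Q]
    (M : Minsky Q) (E : Encoding M α) (q1 q2 q3 : Q)
    (hx : (q1, 1, q2, some q3) ∈ M.I) (m2 : ℕ) (Ax : Set α) :
    E.toAPA.TransVia Ax
      {(E.σ1 0, some (E.σIc ⟨(q1, 1, q2, some q3), hx⟩), E.σQ q2)}
      (encStateC E ⟨(q1, 1, q2, some q3), hx⟩ 0 m2)
      (encState E q2 0 m2) ∧
    E.σ1 0 ∈ encState E q2 0 m2 :=
  second_phase_zero_test_transition_general M E q1 q2 q3 hx m2 Ax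
end
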